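/- If two features f, g satisfy ∂(D)^+_{s,f} ≤ ∂(D)^-_{s,g} for some support sequence s (and all relevant discriminabilities are positive), then the true intrinsic dimensionalities are ordered accordingly: ∂(D)_f ≤ ∂(D)_g. -/

import Mathlib

open Finset

variable {α : Type*}

/-- The diameter of `f`-values over a finite set `M`:
`max_{x,y ∈ M} |f x - f y|` (0 if `M` is empty). -/
noncomputable def fdiam [DecidableEq α] (f : α → ℝ) (M : Finset α) : ℝ :=
  if h : (M ×ˢ M).Nonempty then (M ×ˢ M).sup' h (fun p => |f p.1 - f p.2|) else 0

/-- `φ_{k,f}` : the minimum over all `k`-element subsets `M ⊆ X` of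
`max_{x,y ∈ M} |f x - f y|` (0 if there is no such subset). -/
noncomputable def phi [DecidableEq α] (X : Finset α) (f : α → ℝ) (k : ℕ) : ℝ :=
  if h : (X.powersetCard k).Nonempty then (X.powersetCard k).inf' h (fdiam f) else 0

/-- Normalized discriminability `Δ(D)_f = (1/|X|) ∑_{k=2}^{|X|} (1/k) φ_{k,f}`. -/
noncomputable def nDelta [DecidableEq α] (X : Finset α) (f : α → ℝ) : ℝ :=
  (1 / (X.card : ℝ)) * ∑ k ∈ Finset.Icc 2 X.card, (1 / (k : ℝ)) * phi X f k

/-- Upper normalized discriminability with respect to a support sequence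
`s` (indexed `1,…,l`). -/
noncomputable def nDeltaUp [DecidableEq α] (X : Finset α) (f : α → ℝ) (s : ℕ → ℕ) (l : ℕ) : ℝ :=
  (1 / (X.card : ℝ)) *
    ((∑ i ∈ Finset.Icc 1 l, (1 / (s i : ℝ)) * phi X f (s i)) +
      ∑ i ∈ Finset.Icc 1 (l - 1), ∑ j ∈ Finset.Ioo (s i) (s (i + 1)),
        (1 / (j : ℝ)) * phi X f (s (i + 1)))

/-- Lower normalized discriminability with respect to a support sequence
`s` (indexed `1,…,l`). -/
noncomputable def nDeltaLow [DecidableEq α] (X : Finset α) (f : α → ℝ) (s : ℕ → ℕ) (l : ℕ) : ℝ :=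
  (1 / (X.card : ℝ)) *
    ((∑ i ∈ Finset.Icc 1 l, (1 / (s i : ℝ)) * phi X f (s i)) +
      ∑ i ∈ Finset.Icc 1 (l - 1), ∑ j ∈ Finset.Ioo (s i) (s (i + 1)),
        (1 / (j : ℝ)) * phi X f (s i))

lemma fdiam_nonneg [DecidableEq α] (f : α → ℝ) (M : Finset α) :
    0 ≤ fdiam f M := by
  unfold fdiam
  split_ifs with h
  · obtain ⟨p, hp⟩ := h
    exact le_trans (abs_nonneg _) (Finset.le_sup' (fun p : α × α => |f p.1 - f p.2|) hp)
  · exact le_refl _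

lemma fdiam_mono [DecidableEq α] (f : α → ℝ) {N M : Finset α} (hNM : N ⊆ M) :
    fdiam f N ≤ fdiam f M := by
  unfold fdiam
  split_ifs with h1 h2 h2
  · apply Finset.sup'_le
    intro p hp
    exact Finset.le_sup' (fun p : α × α => |f p.1 - f p.2|) (Finset.product_subset_product hNM hNM hp)
  · exact absurd (Finset.Nonempty.mono (Finset.product_subset_product hNM hNM) h1) h2
  · obtain ⟨p, hp⟩ := h2
    exact le_trans (abs_nonneg _) (Finset.le_sup' (fun p : α × α => |f p.1 - f p.2|) hp)
  · exact le_refl _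

lemma phi_mono [DecidableEq α] (X : Finset α) (f : α → ℝ) {k m : ℕ}
    (hkm : k ≤ m) (hm : m ≤ X.card) : phi X f k ≤ phi X f m := by
  have hk : k ≤ X.card := le_trans hkm hm
  have h1 : (X.powersetCard k).Nonempty := by
    rw [Finset.powersetCard_nonempty]; exact hk
  have h2 : (X.powersetCard m).Nonempty := by
    rw [Finset.powersetCard_nonempty]; exact hm
  unfold phi
  rw [dif_pos h1, dif_pos h2]
  apply Finset.le_inf'
  intro M hM
  rw [Finset.mem_powersetCard] at hM
  obtain ⟨N, hN, hNcard⟩ := Finset.exists_subset_card_eq (hM.2 ▸ hkm : k ≤ M.card)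
  refine le_trans (Finset.inf'_le _ ?_) (fdiam_mono f hN)
  rw [Finset.mem_powersetCard]
  exact ⟨hN.trans hM.1, hNcard⟩

lemma smono {s : ℕ → ℕ} {l : ℕ} (hmono : ∀ i, 1 ≤ i → i < l → s i < s (i + 1)) :
    ∀ i j, 1 ≤ i → i ≤ j → j ≤ l → s i ≤ s j := by
  intro i j hi hij hjl
  induction j with
  | zero => omega
  | succ m ih =>
    rcases Nat.lt_or_ge i (m+1) with hlt | hge
    · have him : i ≤ m := by omega
      exact le_trans (ih him (by omega)) (le_of_lt (hmono m (by omega) (by omega)))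
    · have : i = m + 1 := by omega
      subst this; exact le_refl _

lemma decomp (F : ℕ → ℝ) : ∀ n : ℕ, ∀ s : ℕ → ℕ,
    (∀ i, 1 ≤ i → i < n + 1 → s i < s (i + 1)) →
    ∑ k ∈ Finset.Icc (s 1) (s (n + 1)), F k
      = (∑ i ∈ Finset.Icc 1 (n + 1), F (s i)) +
        ∑ i ∈ Finset.Icc 1 n, ∑ j ∈ Finset.Ioo (s i) (s (i + 1)), F j := by
  intro n
  induction n with
  | zero => simp
  | succ m ih =>
    intro s hmono
    have h2 : s (m + 1) < s (m + 2) := hmono (m + 1) (by omega) (by omega)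
    have h1 : s 1 ≤ s (m + 1) := smono hmono 1 (m + 1) (by omega) (by omega) (by omega)
    have hsplit : Finset.Icc (s 1) (s (m + 1)) ∪ Finset.Ioc (s (m + 1)) (s (m + 2))
        = Finset.Icc (s 1) (s (m + 2)) := by
      ext k; simp only [Finset.mem_union, Finset.mem_Icc, Finset.mem_Ioc]; omega
    have hdisj : Disjoint (Finset.Icc (s 1) (s (m + 1))) (Finset.Ioc (s (m + 1)) (s (m + 2))) := by
      rw [Finset.disjoint_left]; intro a ha hb
      simp only [Finset.mem_Icc, Finset.mem_Ioc] at ha hb; omega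
    rw [← hsplit, Finset.sum_union hdisj,
      ih s (fun i h1 h2 => hmono i h1 (by omega)),
      ← Finset.Ioo_insert_right h2, Finset.sum_insert (by simp),
      Finset.sum_Icc_succ_top (show 1 ≤ m + 2 by omega) (fun i => F (s i)),
      Finset.sum_Icc_succ_top (show 1 ≤ m + 1 by omega)
        (fun i => ∑ j ∈ Finset.Ioo (s i) (s (i + 1)), F j)]
    ring

lemma nDelta_decomp [DecidableEq α] (X : Finset α) (f : α → ℝ) (hX : 2 ≤ X.card)
    (s : ℕ → ℕ) (l : ℕ) (hl : 1 ≤ l) (hs1 : s 1 = 2) (hsl : s l = X.card)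
    (hmono : ∀ i, 1 ≤ i → i < l → s i < s (i + 1)) :
    nDelta X f = (1 / (X.card : ℝ)) *
      ((∑ i ∈ Finset.Icc 1 l, (1 / (s i : ℝ)) * phi X f (s i)) +
        ∑ i ∈ Finset.Icc 1 (l - 1), ∑ j ∈ Finset.Ioo (s i) (s (i + 1)),
          (1 / (j : ℝ)) * phi X f j) := by
  obtain ⟨m, rfl⟩ : ∃ m, l = m + 1 := ⟨l - 1, by omega⟩
  unfold nDelta
  rw [← hs1, ← hsl, decomp (fun k => (1 / (k : ℝ)) * phi X f k) m s hmono]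
  norm_num

lemma low_le_nDelta [DecidableEq α] (X : Finset α) (f : α → ℝ) (hX : 2 ≤ X.card)
    (s : ℕ → ℕ) (l : ℕ) (hl : 1 ≤ l) (hs1 : s 1 = 2) (hsl : s l = X.card)
    (hmono : ∀ i, 1 ≤ i → i < l → s i < s (i + 1)) :
    nDeltaLow X f s l ≤ nDelta X f := by
  rw [nDelta_decomp X f hX s l hl hs1 hsl hmono]
  unfold nDeltaLow
  apply mul_le_mul_of_nonneg_left _ (by positivity)
  apply add_le_add_right
  apply Finset.sum_le_sum
  intro i hi
  apply Finset.sum_le_sum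
  intro j hj
  simp only [Finset.mem_Icc] at hi
  simp only [Finset.mem_Ioo] at hj
  have hjcard : j ≤ X.card := by
    have : s (i + 1) ≤ s l := smono hmono (i + 1) l (by omega) (by omega) (le_refl _)
    omega
  exact mul_le_mul_of_nonneg_left (phi_mono X f (le_of_lt hj.1) hjcard) (by positivity)

lemma nDelta_le_up [DecidableEq α] (X : Finset α) (f : α → ℝ) (hX : 2 ≤ X.card)
    (s : ℕ → ℕ) (l : ℕ) (hl : 1 ≤ l) (hs1 : s 1 = 2) (hsl : s l = X.card)
    (hmono : ∀ i, 1 ≤ i → i < l → s i < s (i + 1)) :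
    nDelta X f ≤ nDeltaUp X f s l := by
  rw [nDelta_decomp X f hX s l hl hs1 hsl hmono]
  unfold nDeltaUp
  apply mul_le_mul_of_nonneg_left _ (by positivity)
  apply add_le_add_right
  apply Finset.sum_le_sum
  intro i hi
  apply Finset.sum_le_sum
  intro j hj
  simp only [Finset.mem_Icc] at hi
  simp only [Finset.mem_Ioo] at hj
  have hjcard : s (i + 1) ≤ X.card := by
    have : s (i + 1) ≤ s l := smono hmono (i + 1) l (by omega) (by omega) (le_refl _)
    omega
  exact mul_le_mul_of_nonneg_left (phi_mono X f (le_of_lt hj.2) hjcard) (by positivity)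

/-- if `∂(D)^+_{s,f} ≤ ∂(D)^-_{s,g}` then `∂(D)_f ≤ ∂(D)_g`. -/
theorem intrinsicDim_order_of_bounds {α : Type*} [DecidableEq α] (X : Finset α)
    (f g : α → ℝ) (hX : 2 ≤ X.card) (s : ℕ → ℕ) (l : ℕ) (hl : 1 ≤ l)
    (hs1 : s 1 = 2) (hsl : s l = X.card)
    (hmono : ∀ i, 1 ≤ i → i < l → s i < s (i + 1))
    (hposf : 0 < nDeltaLow X f s l) (hposg : 0 < nDeltaLow X g s l)
    (h : 1 / (nDeltaLow X f s l) ^ 2 ≤ 1 / (nDeltaUp X g s l) ^ 2) :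
    1 / (nDelta X f) ^ 2 ≤ 1 / (nDelta X g) ^ 2 := by
  have hf1 : nDeltaLow X f s l ≤ nDelta X f := low_le_nDelta X f hX s l hl hs1 hsl hmono
  have hg1 : nDeltaLow X g s l ≤ nDelta X g := low_le_nDelta X g hX s l hl hs1 hsl hmono
  have hg2 : nDelta X g ≤ nDeltaUp X g s l := nDelta_le_up X g hX s l hl hs1 hsl hmono
  have hgpos : 0 < nDelta X g := lt_of_lt_of_le hposg hg1
  have h1 : 1 / (nDelta X f) ^ 2 ≤ 1 / (nDeltaLow X f s l) ^ 2 := by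
    apply one_div_le_one_div_of_le (by positivity)
    exact pow_le_pow_left₀ (le_of_lt hposf) hf1 2
  have h2 : 1 / (nDeltaUp X g s l) ^ 2 ≤ 1 / (nDelta X g) ^ 2 := by
    apply one_div_le_one_div_of_le (by positivity)
    exact pow_le_pow_left₀ (le_of_lt hgpos) hg2 2
  linarith
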